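/- Let f: ℝ^d → ℝ be twice continuously differentiable with Hessian uniformly bounded in operator norm by M. Let ε ~ N(0, σ²I_d), r = f(z) − s, and g = ∇f(z). Then |E[|f(z+ε) − s|] − E[|r + gᵀε|]| ≤ (M/2)·σ²·d. -/

import Mathlib

/-!
Taylor's theorem with the Hessian bound gives, pointwise in `ε`,
`|f (z + ε) - f z - ⟪∇f z, ε⟫| ≤ (M / 2) ‖ε‖²`; since `x ↦ |x - s|` is 1-Lipschitz, the same bound
holds for the difference of the two integrands, and integrating it against the Gaussian, whose
second moment is `E ‖ε‖² = d σ²`, gives the claim.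
-/

open MeasureTheory ProbabilityTheory Real

noncomputable def gaussPi (d : ℕ) (σ : NNReal) : Measure (EuclideanSpace ℝ (Fin d)) :=
  Measure.map (MeasurableEquiv.toLp 2 (Fin d → ℝ))
    (Measure.pi fun _ : Fin d => gaussianReal 0 (σ ^ 2))

open scoped NNReal

section Taylor

variable {E F : Type*} [NormedAddCommGroup E] [NormedSpace ℝ E]
  [NormedAddCommGroup F] [NormedSpace ℝ F]

theorem norm_sub_sub_fderiv_le_of_norm_fderiv_sub_le {f : E → F} (hf : Differentiable ℝ f)
    {M : ℝ} (hM : ∀ x y, ‖fderiv ℝ f x - fderiv ℝ f y‖ ≤ M * ‖x - y‖) (z v : E) :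
    ‖f (z + v) - f z - fderiv ℝ f z v‖ ≤ M / 2 * ‖v‖ ^ 2 := by
  let g : ℝ → F := fun t => f (z + t • v) - f z - t • fderiv ℝ f z v
  have hg : ∀ t, HasDerivAt g (fderiv ℝ f (z + t • v) v - fderiv ℝ f z v) t := by
    intro t
    have hline : HasDerivAt (fun t : ℝ => z + t • v) v t := by
      simpa using ((hasDerivAt_id t).smul_const v).const_add z
    have hlin : HasDerivAt (fun t : ℝ => t • fderiv ℝ f z v) (fderiv ℝ f z v) t := by
      simpa using (hasDerivAt_id' t).smul_const (fderiv ℝ f z v)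
    exact (((hf _).hasFDerivAt.comp_hasDerivAt t hline).sub_const (f z)).sub hlin
  have hB : ∀ t, HasDerivAt (fun t => M / 2 * ‖v‖ ^ 2 * t ^ 2) (M * ‖v‖ ^ 2 * t) t :=
    fun t => ((hasDerivAt_pow 2 t).const_mul (M / 2 * ‖v‖ ^ 2)).congr_deriv
      (by push_cast; ring)
  have hbound : ∀ t ∈ Set.Ico (0 : ℝ) 1,
      ‖fderiv ℝ f (z + t • v) v - fderiv ℝ f z v‖ ≤ M * ‖v‖ ^ 2 * t := by
    intro t ht
    calc ‖fderiv ℝ f (z + t • v) v - fderiv ℝ f z v‖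
        = ‖(fderiv ℝ f (z + t • v) - fderiv ℝ f z) v‖ := rfl
      _ ≤ ‖fderiv ℝ f (z + t • v) - fderiv ℝ f z‖ * ‖v‖ := ContinuousLinearMap.le_opNorm _ _
      _ ≤ M * ‖t • v‖ * ‖v‖ := by gcongr; simpa using hM (z + t • v) z
      _ = M * ‖v‖ ^ 2 * t := by rw [norm_smul, Real.norm_of_nonneg ht.1]; ring
  simpa [g] using image_norm_le_of_norm_deriv_right_le_deriv_boundary (f := g)
    (fun t _ => (hg t).continuousAt.continuousWithinAt) (fun t _ => (hg t).hasDerivWithinAt)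
    (by simp [g]) hB hbound (Set.right_mem_Icc.2 zero_le_one)

end Taylor

theorem abs_integral_sub_integral_le {α : Type*} [MeasurableSpace α] {μ : Measure α}
    {f g h : α → ℝ} (hf : AEStronglyMeasurable f μ) (hg : Integrable g μ) (hh : Integrable h μ)
    (hfg : ∀ x, |f x - g x| ≤ h x) :
    |∫ x, f x ∂μ - ∫ x, g x ∂μ| ≤ ∫ x, h x ∂μ := by
  have hfi : Integrable f μ := (hg.abs.add hh).mono' hf <| .of_forall fun x => by
    rw [Real.norm_eq_abs, Pi.add_apply]
    linarith [abs_sub_abs_le_abs_sub (f x) (g x), hfg x]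
  rw [← integral_sub hfi hg]
  exact abs_integral_le_integral_abs.trans (integral_mono (hfi.sub hg).abs hh hfg)

theorem integral_sq_gaussianReal (μ : ℝ) (v : ℝ≥0) :
    ∫ x, x ^ 2 ∂gaussianReal μ v = μ ^ 2 + v := by
  have := variance_eq_sub (memLp_id_gaussianReal (μ := μ) (v := v) 2)
  simp only [variance_id_gaussianReal, Pi.pow_apply, id_eq, integral_id_gaussianReal] at this
  linarith

instance isProbabilityMeasure_gaussPi (d : ℕ) (σ : ℝ≥0) : IsProbabilityMeasure (gaussPi d σ) :=
  Measure.isProbabilityMeasure_map (by fun_prop)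

section gaussPi

variable (d : ℕ) (σ : ℝ≥0)

theorem integrable_sq_eval_pi_gaussianReal (i : Fin d) :
    Integrable (fun x : Fin d → ℝ => x i ^ 2) (Measure.pi fun _ => gaussianReal 0 (σ ^ 2)) :=
  ((memLp_id_gaussianReal 2).comp_measurePreserving (measurePreserving_eval _ i)).integrable_sq

theorem integral_sq_eval_pi_gaussianReal (i : Fin d) :
    ∫ x : Fin d → ℝ, x i ^ 2 ∂(Measure.pi fun _ => gaussianReal 0 (σ ^ 2)) = σ ^ 2 := by
  have := integral_map (μ := Measure.pi fun _ : Fin d => gaussianReal 0 (σ ^ 2))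
    (measurable_pi_apply i).aemeasurable (f := fun y : ℝ => y ^ 2) (by fun_prop)
  rw [(measurePreserving_eval _ i).map_eq, integral_sq_gaussianReal] at this
  simpa using this.symm

theorem integrable_norm_sq_gaussPi : Integrable (fun x => ‖x‖ ^ 2) (gaussPi d σ) := by
  rw [gaussPi, integrable_map_equiv]
  simp only [EuclideanSpace.norm_sq_eq, Function.comp_def, MeasurableEquiv.coe_toLp,
    Real.norm_eq_abs, sq_abs]
  exact integrable_finsetSum Finset.univ fun i _ => integrable_sq_eval_pi_gaussianReal d σ i

theorem integral_norm_sq_gaussPi : ∫ x, ‖x‖ ^ 2 ∂gaussPi d σ = d * σ ^ 2 := by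
  rw [gaussPi, integral_map_equiv]
  simp only [EuclideanSpace.norm_sq_eq, MeasurableEquiv.coe_toLp, Real.norm_eq_abs,
    sq_abs]
  rw [integral_finsetSum _ fun i _ => integrable_sq_eval_pi_gaussianReal d σ i]
  simp [integral_sq_eval_pi_gaussianReal]

theorem memLp_two_gaussPi : MemLp id 2 (gaussPi d σ) := by
  rw [← memLp_norm_iff aestronglyMeasurable_id, memLp_two_iff_integrable_sq (by fun_prop)]
  exact integrable_norm_sq_gaussPi d σ

end gaussPi

/-- first-order Gaussian-smoothed ℓ1 approximation bound. -/
theorem stmt0 {d : ℕ} (f : EuclideanSpace ℝ (Fin d) → ℝ) (hf : ContDiff ℝ 2 f)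
    (M : ℝ) (hM : ∀ ξ, ‖fderiv ℝ (fderiv ℝ f) ξ‖ ≤ M)
    (σ : NNReal) (z : EuclideanSpace ℝ (Fin d)) (s : ℝ) :
    |(∫ ε, |f (z + ε) - s| ∂(gaussPi d σ)) -
        ∫ ε, |(f z - s) + (inner ℝ (gradient f z) ε : ℝ)| ∂(gaussPi d σ)| ≤
      (M / 2) * (σ : ℝ) ^ 2 * d := by
  have hf' : Differentiable ℝ (fderiv ℝ f) :=
    (hf.fderiv_right (m := 1) le_rfl).differentiable one_ne_zero
  have hlip : ∀ x y, ‖fderiv ℝ f x - fderiv ℝ f y‖ ≤ M * ‖x - y‖ := fun x y =>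
    convex_univ.norm_image_sub_le_of_norm_fderiv_le (fun ξ _ => hf' ξ) (fun ξ _ => hM ξ)
      (Set.mem_univ y) (Set.mem_univ x)
  have htaylor : ∀ ε, |(|f (z + ε) - s| - |(f z - s) + (inner ℝ (gradient f z) ε : ℝ)|)| ≤
      M / 2 * ‖ε‖ ^ 2 := fun ε => by
    refine (abs_abs_sub_abs_le_abs_sub _ _).trans ?_
    rw [inner_gradient_left, ← Real.norm_eq_abs,
      show f (z + ε) - s - (f z - s + fderiv ℝ f z ε) = f (z + ε) - f z - fderiv ℝ f z ε by ring]
    exact norm_sub_sub_fderiv_le_of_norm_fderiv_sub_le (hf.differentiable two_ne_zero) hlip z ε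
  have hlinear :
      Integrable (fun ε => |(f z - s) + (inner ℝ (gradient f z) ε : ℝ)|) (gaussPi d σ) :=
    ((integrable_const _).add
      (((memLp_two_gaussPi d σ).integrable one_le_two).const_inner _)).abs
  calc _ ≤ ∫ ε, M / 2 * ‖ε‖ ^ 2 ∂gaussPi d σ :=
        abs_integral_sub_integral_le (by fun_prop) hlinear
          ((integrable_norm_sq_gaussPi d σ).const_mul _) htaylor
    _ = M / 2 * σ ^ 2 * d := by rw [integral_const_mul, integral_norm_sq_gaussPi]; ring
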